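/- arXiv:quant-ph/0307120 — 2 statements merged into one kernel-verified Lean document; each statement's English description precedes it below -/
import Mathlib

section
/- Let ρ be a density matrix on ℋ_A ⊗ ℋ_B (both finite-dimensional complex Hilbert spaces) and suppose ρ has a symmetric extension ρ' on ℋ_A ⊗ ℋ_{B_1} ⊗ ... ⊗ ℋ_{B_m} (each ℋ_{B_i} = ℋ_B), i.e. for each i ∈ {1,...,m} the reduced density matrix of ρ' on ℋ_A ⊗ ℋ_{B_i}, obtained by tracing out all other B factors, equals ρ. Then for any finite family of POVMs {E^j_a}_a (j ranging over an arbitrary finite index set) on ℋ_A and any m POVMs {F^i_b}_b (i = 1,...,m) on ℋ_B, there exists a local hidden variable model reproducing the quantum statistics: a finite set Λ, a probability distribution p on Λ, and response functions P_A(a | j, λ) ∈ [0,1] with Σ_a P_A(a|j,λ) = 1 and P_B(b | i, λ) ∈ [0,1] with Σ_b P_B(b|i,λ) = 1, such that Tr(ρ (E^j_a ⊗ F^i_b)) = Σ_{λ∈Λ} p(λ) P_A(a|j,λ) P_B(b|i,λ) for all i, j, a, b. -/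
open Matrix
open scoped Kronecker ComplexConjugate ComplexOrder

/-!
Let Bob measure `F k` on the `k`-th copy `B_k` of the extension, for all `k` at once. The joint
outcome `c : Fin m → OB` is the hidden variable, distributed as
`p c = Tr (ρ' (1 ⊗ F 1 (c 1) ⊗ ⋯ ⊗ F m (c m)))`. Bob answers measurement `i` deterministically
with `c i`, and Alice answers `E j` with the conditional distribution
`Tr (ρ' (E j a ⊗ F 1 (c 1) ⊗ ⋯ ⊗ F m (c m))) / p c`. Summing out the outcomes `c k`, `k ≠ i`,
replaces each `F k` by `∑ b, F k b = 1` and leaves the reduced state of `ρ'` on `A B_i`, which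
is `ρ` by symmetry.
-/

/-- A density matrix: positive semidefinite with trace 1. -/
def IsDensityMatrix {n : Type*} [Fintype n] [DecidableEq n] (ρ : Matrix n n ℂ) : Prop :=
  ρ.PosSemidef ∧ ρ.trace = 1

/-- A POVM: a finite family of positive semidefinite operators summing to the identity. -/
def IsPOVM {n O : Type*} [Fintype n] [DecidableEq n] [Fintype O]
    (E : O → Matrix n n ℂ) : Prop :=
  (∀ a, (E a).PosSemidef) ∧ ∑ a, E a = 1

/-- The reduced density matrix of a state on `ℋ_A ⊗ ℋ_B^{⊗m}` on the factors `ℋ_A ⊗ ℋ_{B_i}`,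
obtained by tracing out all the other `B` factors. -/
noncomputable def reducedAt {dA dB m : ℕ}
    (ρ' : Matrix (Fin dA × (Fin m → Fin dB)) (Fin dA × (Fin m → Fin dB)) ℂ)
    (i : Fin m) : Matrix (Fin dA × Fin dB) (Fin dA × Fin dB) ℂ :=
  Matrix.of fun p q => ∑ g : Fin m → Fin dB,
    if g i = p.2 then ρ' (p.1, g) (q.1, Function.update g i q.2) else 0

namespace Matrix

section piKronecker

variable {ι l m n O R : Type*} [Fintype ι]

def piKronecker [CommMonoid R] (M : ι → Matrix m n R) : Matrix (ι → m) (ι → n) R :=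
  of fun g h => ∏ k, M k (g k) (h k)

@[simp]
theorem piKronecker_apply [CommMonoid R] (M : ι → Matrix m n R) (g : ι → m) (h : ι → n) :
    piKronecker M g h = ∏ k, M k (g k) (h k) :=
  rfl

variable [CommSemiring R]

theorem piKronecker_mul [DecidableEq ι] [Fintype m] (M : ι → Matrix l m R) (N : ι → Matrix m n R) :
    piKronecker (fun k => M k * N k) = piKronecker M * piKronecker N := by
  ext g h
  simp [mul_apply, Fintype.prod_sum, Finset.prod_mul_distrib]

theorem conjTranspose_piKronecker [StarRing R] (M : ι → Matrix m n R) :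
    (piKronecker M)ᴴ = piKronecker fun k => (M k)ᴴ := by
  ext g h
  simp [star_prod]

theorem piKronecker_one [DecidableEq n] : piKronecker (fun _ : ι => (1 : Matrix n n R)) = 1 := by
  ext g h
  simp [one_apply, Finset.prod_boole, funext_iff]

theorem sum_piKronecker [DecidableEq ι] [Fintype O] (F : ι → O → Matrix m n R) :
    ∑ c : ι → O, piKronecker (fun k => F k (c k)) = piKronecker fun k => ∑ o, F k o := by
  ext g h
  simp [sum_apply, Fintype.prod_sum]

theorem piKronecker_eq_zero {M : ι → Matrix m n R} {i : ι} (hi : M i = 0) :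
    piKronecker M = 0 := by
  ext g h
  exact Finset.prod_eq_zero (Finset.mem_univ i) (by simp [hi])

theorem sum_ite_apply_eq_piKronecker [DecidableEq ι] [Fintype O] [DecidableEq O]
    (F : ι → O → Matrix m n R) (i : ι) (o : O) :
    ∑ c : ι → O, (if c i = o then piKronecker (fun k => F k (c k)) else 0) =
      piKronecker (Function.update (fun k => ∑ o', F k o') i (F i o)) := by
  -- Replacing the family `F i` by `Pi.single o (F i o)` kills exactly the terms with `c i ≠ o`.
  set F' := Function.update F i (Pi.single o (F i o))
  have hF' (c : ι → O) : piKronecker (fun k => F' k (c k)) =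
      if c i = o then piKronecker (fun k => F k (c k)) else 0 := by
    split_ifs with hc
    · congr 1; funext k
      rcases eq_or_ne k i with rfl | hk <;> simp [F', *]
    · exact piKronecker_eq_zero (i := i) (by simp [F', hc])
  have hsum : (fun k => ∑ o', F' k o') = Function.update (fun k => ∑ o', F k o') i (F i o) := by
    funext k
    rcases eq_or_ne k i with rfl | hk <;> simp [F', *]
  simp_rw [← hF', sum_piKronecker, hsum]

theorem piKronecker_update_one_apply [DecidableEq ι] [DecidableEq n] (M : Matrix n n R) (i : ι)
    (g h : ι → n) :
    piKronecker (Function.update (1 : ι → Matrix n n R) i M) g h =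
      if ∀ k ≠ i, g k = h k then M (g i) (h i) else 0 := by
  have hoff : ∀ k ∈ ({i}ᶜ : Finset ι), Function.update (1 : ι → Matrix n n R) i M k (g k) (h k) =
      if g k = h k then 1 else 0 := fun k hk => by
    rw [Function.update_of_ne (by simpa using hk), Pi.one_apply, one_apply]
  rw [piKronecker_apply, Fintype.prod_eq_mul_prod_compl i, Finset.prod_congr rfl hoff,
    Finset.prod_boole]
  simp

theorem sum_mul_piKronecker_update_one [DecidableEq ι] [Fintype n] [DecidableEq n]
    (M : Matrix n n R) (i : ι) (t : (ι → n) → R) (g : ι → n) :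
    ∑ h, t h * piKronecker (Function.update (1 : ι → Matrix n n R) i M) h g =
      ∑ v, t (Function.update g i v) * M v (g i) := by
  have hupdate : ∀ v, t (Function.update g i v) * M v (g i) =
      t (Function.update g i v) * M (Function.update g i v i) (g i) := by simp
  simp_rw [piKronecker_update_one_apply, mul_ite, mul_zero, ← Finset.sum_filter, hupdate]
  rw [← Finset.sum_image (f := fun h => t h * M (h i) (g i))
    (Function.update_injective g i).injOn]
  congr 1
  ext h
  simp only [Finset.mem_image, Finset.mem_filter, Finset.mem_univ, true_and,
    Function.update_eq_iff]
  exact ⟨fun hg => ⟨h i, rfl, fun k hk => (hg k hk).symm⟩, fun ⟨_, _, hg⟩ k hk => (hg k hk).symm⟩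

end piKronecker

section kronecker

variable {l m n p O R : Type*} [Fintype O] [CommSemiring R]

theorem sum_kronecker (A : O → Matrix l m R) (B : Matrix n p R) :
    (∑ o, A o) ⊗ₖ B = ∑ o, A o ⊗ₖ B := by
  ext
  simp [sum_apply, Finset.sum_mul]

theorem kronecker_sum (A : Matrix l m R) (B : O → Matrix n p R) :
    A ⊗ₖ (∑ o, B o) = ∑ o, A ⊗ₖ B o := by
  ext
  simp [sum_apply, Finset.mul_sum]

end kronecker

section PosSemidef

open scoped MatrixOrder

variable {ι n 𝕜 : Type*} [Fintype ι] [Fintype n] [RCLike 𝕜]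

theorem PosSemidef.piKronecker [DecidableEq ι] [DecidableEq n] {M : ι → Matrix n n 𝕜}
    (hM : ∀ k, (M k).PosSemidef) : (piKronecker M).PosSemidef := by
  choose B hB using fun k => CStarAlgebra.nonneg_iff_eq_star_mul_self.mp (hM k).nonneg
  simp_rw [funext hB, piKronecker_mul, star_eq_conjTranspose, ← conjTranspose_piKronecker]
  exact posSemidef_conjTranspose_mul_self _

theorem PosSemidef.trace_mul_nonneg [DecidableEq n] {A B : Matrix n n 𝕜} (hA : A.PosSemidef)
    (hB : B.PosSemidef) : 0 ≤ (A * B).trace := by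
  obtain ⟨C, rfl⟩ := CStarAlgebra.nonneg_iff_eq_star_mul_self.mp hB.nonneg
  rw [← mul_assoc, trace_mul_cycle]
  exact (hA.mul_mul_conjTranspose_same C).trace_nonneg

end PosSemidef

end Matrix

theorem trace_reducedAt_mul_kronecker {dA dB m : ℕ}
    (ρ' : Matrix (Fin dA × (Fin m → Fin dB)) (Fin dA × (Fin m → Fin dB)) ℂ) (i : Fin m)
    (G : Matrix (Fin dA) (Fin dA) ℂ) (M : Matrix (Fin dB) (Fin dB) ℂ) :
    (reducedAt ρ' i * (G ⊗ₖ M)).trace =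
      (ρ' * (G ⊗ₖ
        piKronecker (Function.update (1 : Fin m → Matrix (Fin dB) (Fin dB) ℂ) i M))).trace := by
  -- Both sides become `∑ x g y v, ρ' (x, g) (y, update g i v) * G y x * M v (g i)`.
  simp only [trace, diag, mul_apply, Fintype.sum_prod_type, reducedAt, of_apply,
    kroneckerMap_apply, ← mul_assoc, sum_mul_piKronecker_update_one]
  refine Finset.sum_congr rfl fun x _ => ?_
  rw [← Finset.sum_comm_cycle]
  simp_rw [Finset.sum_mul, ite_mul, zero_mul,
    Finset.sum_comm (γ := Fin dB) (α := Fin m → Fin dB), Fintype.sum_ite_eq]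
  rw [Finset.sum_comm]

section jointTrace

variable {dA dB m : ℕ} {OB : Type*}

noncomputable def jointTrace (ρ' : Matrix (Fin dA × (Fin m → Fin dB)) (Fin dA × (Fin m → Fin dB)) ℂ)
    (F : Fin m → OB → Matrix (Fin dB) (Fin dB) ℂ) (G : Matrix (Fin dA) (Fin dA) ℂ)
    (c : Fin m → OB) : ℂ :=
  (ρ' * (G ⊗ₖ piKronecker fun k => F k (c k))).trace

variable {ρ' : Matrix (Fin dA × (Fin m → Fin dB)) (Fin dA × (Fin m → Fin dB)) ℂ}
  {F : Fin m → OB → Matrix (Fin dB) (Fin dB) ℂ}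

theorem jointTrace_nonneg (hρ' : ρ'.PosSemidef) {G : Matrix (Fin dA) (Fin dA) ℂ}
    (hG : G.PosSemidef) {c : Fin m → OB} (hF : ∀ k, (F k (c k)).PosSemidef) :
    0 ≤ jointTrace ρ' F G c :=
  hρ'.trace_mul_nonneg (hG.kronecker (.piKronecker hF))

theorem sum_jointTrace_left {OA : Type*} [Fintype OA] (E : OA → Matrix (Fin dA) (Fin dA) ℂ)
    (c : Fin m → OB) :
    ∑ a, jointTrace ρ' F (E a) c = jointTrace ρ' F (∑ a, E a) c := by
  simp only [jointTrace, sum_kronecker, Finset.mul_sum, trace_sum]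

theorem sum_jointTrace_one [Fintype OB] (hF : ∀ k, ∑ o, F k o = 1) :
    ∑ c, jointTrace ρ' F 1 c = ρ'.trace := by
  simp only [jointTrace, ← trace_sum, ← Finset.mul_sum, ← kronecker_sum, sum_piKronecker, hF,
    piKronecker_one, one_kronecker_one, mul_one]

theorem sum_jointTrace_of_apply_eq [Fintype OB] [DecidableEq OB] (hF : ∀ k, ∑ o, F k o = 1)
    (G : Matrix (Fin dA) (Fin dA) ℂ) (i : Fin m) (b : OB) :
    ∑ c, (if c i = b then jointTrace ρ' F G c else 0) = (reducedAt ρ' i * (G ⊗ₖ F i b)).trace := by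
  have hite (c : Fin m → OB) : (if c i = b then jointTrace ρ' F G c else 0) =
      (ρ' * (G ⊗ₖ if c i = b then piKronecker (fun k => F k (c k)) else 0)).trace := by
    split_ifs <;> simp [jointTrace]
  simp only [hite, ← trace_sum, ← Finset.mul_sum, ← kronecker_sum, sum_ite_apply_eq_piKronecker,
    hF, ← Pi.one_def, trace_reducedAt_mul_kronecker]

end jointTrace

theorem exists_conditional_distribution {O : Type*} [Fintype O] [Nonempty O] (q : O → ℝ)
    (hq : ∀ a, 0 ≤ q a) :
    ∃ r : O → ℝ, (∀ a, 0 ≤ r a ∧ r a ≤ 1) ∧ ∑ a, r a = 1 ∧ ∀ a, (∑ b, q b) * r a = q a := by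
  by_cases hsum : ∑ b, q b = 0
  · have hzero : ∀ a, q a = 0 := fun a =>
      (Finset.sum_eq_zero_iff_of_nonneg fun b _ => hq b).mp hsum a (Finset.mem_univ a)
    have hcard : (1 : ℝ) ≤ Fintype.card O := mod_cast Fintype.card_pos
    refine ⟨fun _ => (Fintype.card O : ℝ)⁻¹, fun _ => ⟨by positivity, inv_le_one_of_one_le₀ hcard⟩,
      ?_, fun a => by simp [hsum, hzero a]⟩
    simp [Finset.card_univ, (zero_lt_one.trans_le hcard).ne']
  · have hpos : 0 < ∑ b, q b := (Finset.sum_nonneg fun b _ => hq b).lt_of_ne' hsum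
    refine ⟨fun a => q a / ∑ b, q b, fun a => ⟨div_nonneg (hq a) hpos.le, ?_⟩, ?_,
      fun a => mul_div_cancel₀ _ hsum⟩
    · exact div_le_one_of_le₀ (Finset.single_le_sum (fun b _ => hq b) (Finset.mem_univ a)) hpos.le
    · rw [← Finset.sum_div, div_self hsum]

def IsLHVModel {Λ J I OA OB : Type*} [Fintype Λ] [Fintype OA] [Fintype OB] (p : Λ → ℝ)
    (PA : J → OA → Λ → ℝ) (PB : I → OB → Λ → ℝ) (P : J → I → OA → OB → ℂ) : Prop :=
  (∀ l, 0 ≤ p l) ∧ (∑ l, p l = 1) ∧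
    (∀ j a l, 0 ≤ PA j a l ∧ PA j a l ≤ 1) ∧ (∀ j l, ∑ a, PA j a l = 1) ∧
    (∀ i b l, 0 ≤ PB i b l ∧ PB i b l ≤ 1) ∧ (∀ i l, ∑ b, PB i b l = 1) ∧
    ∀ j i a b, P j i a b = ((∑ l, p l * PA j a l * PB i b l : ℝ) : ℂ)

theorem IsLHVModel.comp_equiv {Λ Λ' J I OA OB : Type*} [Fintype Λ] [Fintype Λ'] [Fintype OA]
    [Fintype OB] {p : Λ → ℝ} {PA : J → OA → Λ → ℝ} {PB : I → OB → Λ → ℝ}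
    {P : J → I → OA → OB → ℂ} (h : IsLHVModel p PA PB P) (e : Λ' ≃ Λ) :
    IsLHVModel (p ∘ e) (fun j a => PA j a ∘ e) (fun i b => PB i b ∘ e) P := by
  obtain ⟨hp, hp1, hPA, hPA1, hPB, hPB1, hP⟩ := h
  refine ⟨fun l => hp (e l), ?_, fun j a l => hPA j a (e l), fun j l => hPA1 j (e l),
    fun i b l => hPB i b (e l), fun i l => hPB1 i (e l), fun j i a b => ?_⟩
  · simpa only [Function.comp_apply, e.sum_comp] using hp1
  · simp only [hP, Function.comp_apply, e.sum_comp (fun l => p l * PA j a l * PB i b l)]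

theorem IsLHVModel.exists_fin {Λ J I OA OB : Type*} [Fintype Λ] [Fintype OA] [Fintype OB]
    {p : Λ → ℝ} {PA : J → OA → Λ → ℝ} {PB : I → OB → Λ → ℝ} {P : J → I → OA → OB → ℂ}
    (h : IsLHVModel p PA PB P) :
    ∃ (N : ℕ) (p' : Fin N → ℝ) (PA' : J → OA → Fin N → ℝ) (PB' : I → OB → Fin N → ℝ),
      IsLHVModel p' PA' PB' P :=
  ⟨_, _, _, _, h.comp_equiv (Fintype.equivFin Λ).symm⟩

theorem IsDensityMatrix.nonempty {n : Type*} [Fintype n] [DecidableEq n] {ρ : Matrix n n ℂ}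
    (hρ : IsDensityMatrix ρ) : Nonempty n := by
  by_contra h
  rw [not_nonempty_iff] at h
  simpa [trace] using hρ.2

theorem IsPOVM.nonempty {n O : Type*} [Fintype n] [DecidableEq n] [Nonempty n] [Fintype O]
    {E : O → Matrix n n ℂ} (hE : IsPOVM E) : Nonempty O := by
  by_contra h
  rw [not_nonempty_iff] at h
  simpa using hE.2.symm

theorem exists_isLHVModel_of_extension {dA dB m : ℕ} {J OA OB : Type*} [Fintype OA] [Fintype OB]
    {ρ : Matrix (Fin dA × Fin dB) (Fin dA × Fin dB) ℂ}
    {ρ' : Matrix (Fin dA × (Fin m → Fin dB)) (Fin dA × (Fin m → Fin dB)) ℂ}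
    (hρ' : IsDensityMatrix ρ') (hext : ∀ i, reducedAt ρ' i = ρ)
    {E : J → OA → Matrix (Fin dA) (Fin dA) ℂ} (hE : ∀ j, IsPOVM (E j))
    {F : Fin m → OB → Matrix (Fin dB) (Fin dB) ℂ} (hF : ∀ i, IsPOVM (F i)) :
    ∃ (p : (Fin m → OB) → ℝ) (PA : J → OA → (Fin m → OB) → ℝ) (PB : Fin m → OB → (Fin m → OB) → ℝ),
      IsLHVModel p PA PB fun j i a b => (ρ * (E j a ⊗ₖ F i b)).trace := by
  classical
  have : Nonempty (Fin dA) := hρ'.nonempty.map Prod.fst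
  have hQ (j a c) : 0 ≤ jointTrace ρ' F (E j a) c :=
    jointTrace_nonneg hρ'.1 ((hE j).1 a) fun k => (hF k).1 (c k)
  have hP (c) : 0 ≤ jointTrace ρ' F 1 c :=
    jointTrace_nonneg hρ'.1 PosSemidef.one fun k => (hF k).1 (c k)
  have hsum (j c) : ∑ a, (jointTrace ρ' F (E j a) c).re = (jointTrace ρ' F 1 c).re := by
    rw [← Complex.re_sum, sum_jointTrace_left, (hE j).2]
  choose PA hPA using fun j c => @exists_conditional_distribution OA _ (hE j).nonempty
    (fun a => (jointTrace ρ' F (E j a) c).re) fun a => (Complex.nonneg_iff.mp (hQ j a c)).1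
  refine ⟨fun c => (jointTrace ρ' F 1 c).re, fun j a c => PA j c a,
    fun i b c => if c i = b then 1 else 0, fun c => (Complex.nonneg_iff.mp (hP c)).1, ?_,
    fun j a c => (hPA j c).1 a, fun j c => (hPA j c).2.1,
    fun i b c => by dsimp only; split_ifs <;> simp,
    fun i c => Fintype.sum_ite_eq _ _, fun j i a b => ?_⟩
  · rw [← Complex.re_sum, sum_jointTrace_one fun k => (hF k).2, hρ'.2, Complex.one_re]
  · dsimp only
    rw [← hext i, ← sum_jointTrace_of_apply_eq (fun k => (hF k).2)]
    push_cast
    refine Finset.sum_congr rfl fun c _ => ?_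
    split_ifs
    · rw [Complex.ofReal_one, mul_one, ← hsum j c, ← Complex.ofReal_mul, (hPA j c).2.2 a]
      exact Complex.eq_re_of_ofReal_le (Complex.ofReal_zero ▸ hQ j a c)
    · simp

theorem symmetric_extension_implies_lhv_general
    {dA dB m : ℕ} {J OA OB : Type} [Fintype OA] [Fintype OB]
    (ρ : Matrix (Fin dA × Fin dB) (Fin dA × Fin dB) ℂ)
    (ρ' : Matrix (Fin dA × (Fin m → Fin dB)) (Fin dA × (Fin m → Fin dB)) ℂ)
    (hρ' : IsDensityMatrix ρ')
    (hext : ∀ i : Fin m, reducedAt ρ' i = ρ)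
    (E : J → OA → Matrix (Fin dA) (Fin dA) ℂ) (hE : ∀ j, IsPOVM (E j))
    (F : Fin m → OB → Matrix (Fin dB) (Fin dB) ℂ) (hF : ∀ i, IsPOVM (F i)) :
    ∃ (N : ℕ) (p : Fin N → ℝ) (PA : J → OA → Fin N → ℝ) (PB : Fin m → OB → Fin N → ℝ),
      (∀ l, 0 ≤ p l) ∧ (∑ l, p l = 1) ∧
      (∀ j a l, 0 ≤ PA j a l ∧ PA j a l ≤ 1) ∧
      (∀ j l, ∑ a, PA j a l = 1) ∧
      (∀ i b l, 0 ≤ PB i b l ∧ PB i b l ≤ 1) ∧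
      (∀ i l, ∑ b, PB i b l = 1) ∧
      (∀ (j : J) (i : Fin m) (a : OA) (b : OB),
        (ρ * (E j a ⊗ₖ F i b)).trace = ((∑ l, p l * PA j a l * PB i b l : ℝ) : ℂ)) := by
  obtain ⟨p, PA, PB, hmodel⟩ := exists_isLHVModel_of_extension hρ' hext hE hF
  exact hmodel.exists_fin

/-- **Theorem 1.** If `ρ` has a symmetric extension `ρ'` to `ℋ_A ⊗ ℋ_{B_1} ⊗ ⋯ ⊗ ℋ_{B_m}`,
then there is a local hidden variable model reproducing the statistics of an arbitrary finite
family of POVMs on Alice's side together with `m` POVMs on Bob's side. -/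
theorem symmetric_extension_implies_lhv
    {dA dB m : ℕ} {J OA OB : Type} [Fintype J] [Fintype OA] [Fintype OB]
    (ρ : Matrix (Fin dA × Fin dB) (Fin dA × Fin dB) ℂ) (hρ : IsDensityMatrix ρ)
    (ρ' : Matrix (Fin dA × (Fin m → Fin dB)) (Fin dA × (Fin m → Fin dB)) ℂ)
    (hρ' : IsDensityMatrix ρ')
    (hext : ∀ i : Fin m, reducedAt ρ' i = ρ)
    (E : J → OA → Matrix (Fin dA) (Fin dA) ℂ) (hE : ∀ j, IsPOVM (E j))
    (F : Fin m → OB → Matrix (Fin dB) (Fin dB) ℂ) (hF : ∀ i, IsPOVM (F i)) :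
    ∃ (N : ℕ) (p : Fin N → ℝ) (PA : J → OA → Fin N → ℝ) (PB : Fin m → OB → Fin N → ℝ),
      (∀ l, 0 ≤ p l) ∧ (∑ l, p l = 1) ∧
      (∀ j a l, 0 ≤ PA j a l ∧ PA j a l ≤ 1) ∧
      (∀ j l, ∑ a, PA j a l = 1) ∧
      (∀ i b l, 0 ≤ PB i b l ∧ PB i b l ≤ 1) ∧
      (∀ i l, ∑ b, PB i b l = 1) ∧
      (∀ (j : J) (i : Fin m) (a : OA) (b : OB),
        (ρ * (E j a ⊗ₖ F i b)).trace = ((∑ l, p l * PA j a l * PB i b l : ℝ) : ℂ)) :=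
  symmetric_extension_implies_lhv_general ρ ρ' hρ' hext E hE F hF
end

section
/- Let |Φ⁺⟩ = (|00⟩ + |11⟩)/√2 be the maximally entangled state of two qubits and let I₂ denote the identity on ℂ². Define the three-qubit operator ρ' = (1/2)(|Φ⁺⟩⟨Φ⁺|_{AB} ⊗ I₂/2) + (1/2)( (I₂/2)_B ⊗ |Φ⁺⟩⟨Φ⁺|_{AE} ) on ℋ_A ⊗ ℋ_B ⊗ ℋ_E with ℋ_A = ℋ_B = ℋ_E = ℂ², where |Φ⁺⟩⟨Φ⁺|_{AE} denotes the maximally entangled state between the first and third qubit. Then ρ' is a density matrix, ρ' is invariant under the unitary swapping the B and E factors, and both its reduced density matrix on ℋ_A ⊗ ℋ_B (tracing out E) and its reduced density matrix on ℋ_A ⊗ ℋ_E (tracing out B) equal ρ = (1/2)|Φ⁺⟩⟨Φ⁺| + (1/2)(I₄/4). Hence the entangled mixed state ρ has a symmetric extension: it is shareable. -/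
open Matrix
open scoped ComplexConjugate ComplexOrder

/-- The maximally entangled two-qubit vector `|Φ⁺⟩ = (|00⟩ + |11⟩)/√2`. -/
noncomputable def phiPlus : Fin 2 × Fin 2 → ℂ :=
  fun x => if x.1 = x.2 then (Real.sqrt 2 : ℂ)⁻¹ else 0

/-- The projector `|Φ⁺⟩⟨Φ⁺|`. -/
noncomputable def projPhiPlus : Matrix (Fin 2 × Fin 2) (Fin 2 × Fin 2) ℂ :=
  Matrix.of fun p q => phiPlus p * conj (phiPlus q)

/-- The Bennett–DiVincenzo–Smolin–Wootters state `ρ = (1/2)|Φ⁺⟩⟨Φ⁺| + (1/2)(I₄/4)`. -/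
noncomputable def rhoBDSW : Matrix (Fin 2 × Fin 2) (Fin 2 × Fin 2) ℂ :=
  (1 / 2 : ℂ) • projPhiPlus +
    (1 / 2 : ℂ) • ((1 / 4 : ℂ) • (1 : Matrix (Fin 2 × Fin 2) (Fin 2 × Fin 2) ℂ))

/-- The three-qubit extension
`ρ' = (1/2)(|Φ⁺⟩⟨Φ⁺|_{AB} ⊗ I₂/2)_E + (1/2)((I₂/2)_B ⊗ |Φ⁺⟩⟨Φ⁺|_{AE})`
on `ℋ_A ⊗ ℋ_B ⊗ ℋ_E`, indexed as `Fin 2 × (Fin 2 × Fin 2)` with `x = (a, (b, e))`. -/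
noncomputable def rhoExt : Matrix (Fin 2 × (Fin 2 × Fin 2)) (Fin 2 × (Fin 2 × Fin 2)) ℂ :=
  Matrix.of fun x y =>
    (1 / 2 : ℂ) * (projPhiPlus (x.1, x.2.1) (y.1, y.2.1) *
      (if x.2.2 = y.2.2 then (1 / 2 : ℂ) else 0)) +
    (1 / 2 : ℂ) * ((if x.2.1 = y.2.1 then (1 / 2 : ℂ) else 0) *
      projPhiPlus (x.1, x.2.2) (y.1, y.2.2))


lemma sqrt2_inv_mul_self : ((Real.sqrt 2 : ℝ) : ℂ)⁻¹ * ((Real.sqrt 2 : ℝ) : ℂ)⁻¹ = (1/2 : ℂ) := by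
  rw [← mul_inv, ← Complex.ofReal_mul, Real.mul_self_sqrt (by norm_num)]
  norm_num

lemma conj_phiPlus (p : Fin 2 × Fin 2) : conj (phiPlus p) = phiPlus p := by
  unfold phiPlus; split <;> simp

lemma projPhiPlus_apply (p q : Fin 2 × Fin 2) :
    projPhiPlus p q = if p.1 = p.2 ∧ q.1 = q.2 then (1/2 : ℂ) else 0 := by
  unfold projPhiPlus phiPlus
  simp only [Matrix.of_apply]
  split_ifs with h1 h2 h2 <;> simp_all [sqrt2_inv_mul_self]

/-- First Kraus-type witness matrix: `rhoExt = W1ᴴ * W1 + W2ᴴ * W2`. -/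
noncomputable def W1 : Matrix (Fin 2) (Fin 2 × (Fin 2 × Fin 2)) ℂ :=
  Matrix.of fun j x => if x.2.2 = j then (1/2 : ℂ) * conj (phiPlus (x.1, x.2.1)) else 0

/-- Second Kraus-type witness matrix. -/
noncomputable def W2 : Matrix (Fin 2) (Fin 2 × (Fin 2 × Fin 2)) ℂ :=
  Matrix.of fun j x => if x.2.1 = j then (1/2 : ℂ) * conj (phiPlus (x.1, x.2.2)) else 0

lemma sum_ite_mul_ite (a b : ℂ) (e f : Fin 2) :
    ∑ i : Fin 2, (if e = i then a else 0) * (if f = i then b else 0) =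
      if e = f then a * b else 0 := by
  fin_cases e <;> fin_cases f <;> simp [Fin.sum_univ_two]

lemma rhoExt_eq : rhoExt = W1ᴴ * W1 + W2ᴴ * W2 := by
  ext x y
  simp only [Matrix.add_apply, Matrix.mul_apply, Matrix.conjTranspose_apply, W1, W2,
    Matrix.of_apply, rhoExt, RCLike.star_def, apply_ite (starRingEnd ℂ), map_zero,
    _root_.map_mul, map_div₀, _root_.map_one, _root_.map_ofNat, Complex.conj_conj,
    conj_phiPlus]
  rw [sum_ite_mul_ite, sum_ite_mul_ite]
  unfold projPhiPlus
  simp only [Matrix.of_apply, conj_phiPlus]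
  split_ifs <;> ring

lemma rhoExt_posSemidef : rhoExt.PosSemidef := by
  rw [rhoExt_eq]
  exact (Matrix.posSemidef_conjTranspose_mul_self W1).add
    (Matrix.posSemidef_conjTranspose_mul_self W2)

/-- **The Bennett–DiVincenzo–Smolin–Wootters example of shareable noisy entanglement.**
`ρ'` is a density matrix, invariant under swapping the `B` and `E` factors, and both its
reduced density matrix on `ℋ_A ⊗ ℋ_B` (tracing out `E`) and on `ℋ_A ⊗ ℋ_E` (tracing out `B`)
equal `ρ = (1/2)|Φ⁺⟩⟨Φ⁺| + (1/2)(I₄/4)`: the entangled state `ρ` has a symmetric extension. -/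
theorem rhoExt_is_symmetric_extension_of_rhoBDSW :
    IsDensityMatrix rhoExt ∧
    (∀ (a a' b b' e e' : Fin 2),
      rhoExt (a, (e, b)) (a', (e', b')) = rhoExt (a, (b, e)) (a', (b', e'))) ∧
    (Matrix.of (fun p q : Fin 2 × Fin 2 =>
      ∑ e : Fin 2, rhoExt (p.1, (p.2, e)) (q.1, (q.2, e))) = rhoBDSW) ∧
    (Matrix.of (fun p q : Fin 2 × Fin 2 =>
      ∑ b : Fin 2, rhoExt (p.1, (b, p.2)) (q.1, (b, q.2))) = rhoBDSW) := by
  refine ⟨⟨rhoExt_posSemidef, ?_⟩, ?_, ?_, ?_⟩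
  · simp only [Matrix.trace, Matrix.diag, rhoExt, Matrix.of_apply, projPhiPlus_apply,
      Fintype.sum_prod_type, Fin.sum_univ_two]
    norm_num
  · intro a a' b b' e e'
    simp only [rhoExt, Matrix.of_apply]
    ring
  · ext ⟨a, b⟩ ⟨c, d⟩
    simp only [Matrix.of_apply, rhoExt, rhoBDSW, projPhiPlus_apply, Fin.sum_univ_two,
      Matrix.add_apply, Matrix.smul_apply, Matrix.one_apply, smul_eq_mul, Prod.mk.injEq]
    fin_cases a <;> fin_cases b <;> fin_cases c <;> fin_cases d <;> norm_num
  · ext ⟨a, b⟩ ⟨c, d⟩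
    simp only [Matrix.of_apply, rhoExt, rhoBDSW, projPhiPlus_apply, Fin.sum_univ_two,
      Matrix.add_apply, Matrix.smul_apply, Matrix.one_apply, smul_eq_mul, Prod.mk.injEq]
    fin_cases a <;> fin_cases b <;> fin_cases c <;> fin_cases d <;> norm_num
end
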